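/- arXiv:1811.06121 — 6 statements merged into one kernel-verified Lean document; each statement's English description precedes it below -/
import Mathlib

section
/- Let L be a bounded linear operator on a Banach space X and K a cone in X with L(K) ⊆ K. If there exist λ₀ > 0 and v ∈ K, v ≠ 0, such that Lv - λ₀v ∈ K, then the spectral radius of L satisfies r(L) ≥ λ₀. -/
/-- Lower bound for the spectral radius: if `L` preserves a cone `K` and
`L v - λ₀ v ∈ K` for some `v ∈ K \ {0}` and `λ₀ > 0`, then `r(L) ≥ λ₀`,
where `r(L) = lim ‖Lⁿ‖^(1/n)`. -/
theorem stmt5 {X : Type*} [NormedAddCommGroup X] [NormedSpace ℝ X]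
    [CompleteSpace X]
    (K : Set X) (hKclosed : IsClosed K)
    (hKadd : ∀ u ∈ K, ∀ v ∈ K, u + v ∈ K)
    (hKsmul : ∀ l : ℝ, 0 ≤ l → ∀ u ∈ K, l • u ∈ K)
    (hKpt : K ∩ (-K) = {0})
    (L : X →L[ℝ] X) (hLK : ∀ u ∈ K, L u ∈ K)
    (l₀ : ℝ) (hl₀ : 0 < l₀)
    (v : X) (hv : v ∈ K) (hv0 : v ≠ 0)
    (hvl : L v - l₀ • v ∈ K)
    (r : ℝ)
    (hr : Filter.Tendsto (fun n : ℕ => ‖L ^ n‖ ^ ((n : ℝ)⁻¹))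
      Filter.atTop (nhds r)) :
    l₀ ≤ r := by
  by_contra hcon
  push_neg at hcon
  have h0K : (0 : X) ∈ K := by
    have h : (0 : X) ∈ ({0} : Set X) := rfl
    rw [← hKpt] at h
    exact h.1
  have hr0 : 0 ≤ r :=
    ge_of_tendsto' hr (fun n => Real.rpow_nonneg (norm_nonneg _) _) |>.trans_eq rfl
  set ρ : ℝ := (r + l₀) / 2 with hρdef
  have hρr : r < ρ := by simp only [hρdef]; linarith
  have hρl : ρ < l₀ := by simp only [hρdef]; linarith
  have hρ0 : 0 < ρ := lt_of_le_of_lt hr0 hρr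
  clear_value ρ
  -- eventual bound on ‖L^n‖
  have hev : ∀ᶠ n : ℕ in Filter.atTop, ‖L ^ n‖ ≤ ρ ^ n := by
    have h1 : ∀ᶠ n : ℕ in Filter.atTop, ‖L ^ n‖ ^ ((n : ℝ)⁻¹) < ρ :=
      hr.eventually_lt_const hρr
    filter_upwards [h1, Filter.eventually_ge_atTop 1] with n hn hn1
    have hn0 : n ≠ 0 := by omega
    have := pow_le_pow_left₀ (Real.rpow_nonneg (norm_nonneg _) _) hn.le n
    rwa [Real.rpow_inv_natCast_pow (norm_nonneg _) hn0] at this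
  -- the iterates applied to the cone element stay in the cone
  have hK' : ∀ n : ℕ, (L ^ n) (L v - l₀ • v) ∈ K := by
    intro n
    induction n with
    | zero => simpa using hvl
    | succ n ih =>
      rw [pow_succ']
      exact hLK _ ih
  set f : ℕ → X := fun n => (l₀ ^ n)⁻¹ • (L ^ n) v with hfdef
  -- telescoping identity
  have htel : ∀ n : ℕ,
      (l₀ ^ (n + 1))⁻¹ • (L ^ n) (L v - l₀ • v) = f (n + 1) - f n := by
    intro n
    have h1 : (L ^ n) (L v) = (L ^ (n + 1)) v := by
      rw [pow_succ]; rfl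
    have h2 : (l₀ ^ (n + 1))⁻¹ * l₀ = (l₀ ^ n)⁻¹ := by
      rw [pow_succ]
      field_simp
    simp only [hfdef, map_sub, map_smul, smul_sub, smul_smul, h1, h2]
  have hsum : ∀ N : ℕ,
      (∑ n ∈ Finset.range N, (l₀ ^ (n + 1))⁻¹ • (L ^ n) (L v - l₀ • v))
        = f N - v := by
    intro N
    have := Finset.sum_range_sub f N
    simp only [htel]
    rw [this]
    simp [hfdef]
  have hsK : ∀ N : ℕ,
      (∑ n ∈ Finset.range N, (l₀ ^ (n + 1))⁻¹ • (L ^ n) (L v - l₀ • v)) ∈ K := by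
    intro N
    induction N with
    | zero => simpa using h0K
    | succ N ih =>
      rw [Finset.sum_range_succ]
      exact hKadd _ ih _ (hKsmul _ (by positivity) _ (hK' N))
  -- f tends to 0
  have hf0 : Filter.Tendsto f Filter.atTop (nhds 0) := by
    refine squeeze_zero_norm' (a := fun n => ‖v‖ * (ρ / l₀) ^ n) ?_ ?_
    · filter_upwards [hev] with n hn
      have h1 : ‖f n‖ = (l₀ ^ n)⁻¹ * ‖(L ^ n) v‖ := by
        rw [hfdef]
        rw [norm_smul, Real.norm_eq_abs,
          abs_of_pos (by positivity : (0:ℝ) < (l₀ ^ n)⁻¹)]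
      rw [h1]
      have h2 : ‖(L ^ n) v‖ ≤ ρ ^ n * ‖v‖ :=
        ((L ^ n).le_opNorm v).trans (by
          apply mul_le_mul_of_nonneg_right hn (norm_nonneg _))
      calc (l₀ ^ n)⁻¹ * ‖(L ^ n) v‖ ≤ (l₀ ^ n)⁻¹ * (ρ ^ n * ‖v‖) := by
            apply mul_le_mul_of_nonneg_left h2 (by positivity)
        _ = ‖v‖ * (ρ / l₀) ^ n := by
            rw [div_pow, div_eq_mul_inv]
            ring
    · have : Filter.Tendsto (fun n : ℕ => (ρ / l₀) ^ n) Filter.atTop (nhds 0) :=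
        tendsto_pow_atTop_nhds_zero_of_lt_one (by positivity)
          ((div_lt_one hl₀).mpr hρl)
      simpa using this.const_mul ‖v‖
  -- partial sums tend to -v, so -v ∈ K
  have hto : Filter.Tendsto
      (fun N => ∑ n ∈ Finset.range N, (l₀ ^ (n + 1))⁻¹ • (L ^ n) (L v - l₀ • v))
      Filter.atTop (nhds (-v)) := by
    simp only [hsum]
    have := hf0.sub_const v
    simpa using this
  have hnegv : -v ∈ K :=
    hKclosed.mem_of_tendsto hto (Filter.Eventually.of_forall hsK)
  have : v ∈ K ∩ (-K) := ⟨hv, by simpa [Set.mem_neg] using hnegv⟩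
  rw [hKpt] at this
  exact hv0 this
end

section
/- Let K be a cone with nonempty interior in a Banach space X and let L: X → X be a positive compact linear operator (L(K) ⊆ K). If v is an interior point of K and λ₀ > 0 satisfy λ₀v - Lv ∈ K, then r(L) ≤ λ₀. -/
/-! After rescaling, `M = l₀⁻¹ • L` satisfies `M v ≤ v`. As `v` is interior, every `x` satisfies
`-c v ≤ x ≤ c v` for some `c ≥ 0`, and this order interval is `M`-invariant, so every orbit
`Mⁿ x` is order bounded. Compactness upgrades this to norm boundedness: along an unbounded orbit,
at record indices `Mⁿ x / ‖Mⁿ x‖` is the image under `M` of a vector of the unit ball, so these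
unit vectors accumulate at some `z` with `‖z‖ = 1`; dividing `-c v ≤ Mⁿ x ≤ c v` by `‖Mⁿ x‖ → ∞`
gives `±z ∈ K`, impossible in a pointed cone. Banach–Steinhaus then bounds `‖Mⁿ‖`, i.e.
`‖Lⁿ‖ ≤ C l₀ⁿ`, whence `r ≤ l₀`. -/

open Filter Topology Set

theorem exists_lt_succ_of_not_bddAbove {s : ℕ → ℝ} (hs : ¬BddAbove (range s)) (C : ℝ) :
    ∃ m, C < s (m + 1) ∧ s m < s (m + 1) := by
  classical
  have hex : ∃ n, max C (s 0) < s n := by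
    simpa using not_bddAbove_iff.1 hs (max C (s 0))
  obtain ⟨m, hm⟩ : ∃ m, Nat.find hex = m + 1 :=
    Nat.exists_eq_succ_of_ne_zero fun h0 => by
      have h := Nat.find_spec hex
      rw [h0] at h
      exact (le_max_right C (s 0)).not_gt h
  have hlt : max C (s 0) < s (m + 1) := hm ▸ Nat.find_spec hex
  have hle : s m ≤ max C (s 0) := not_lt.1 (Nat.find_min hex (by omega))
  exact ⟨m, (le_max_left _ _).trans_lt hlt, hle.trans_lt hlt⟩

theorem le_of_tendsto_norm_pow_rpow_inv {A : Type*} [SeminormedRing A] {a : A} {l C r : ℝ}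
    (hl : 0 < l) (hC : ∀ n : ℕ, ‖a ^ n‖ ≤ C * l ^ n)
    (hr : Tendsto (fun n : ℕ => ‖a ^ n‖ ^ ((n : ℝ)⁻¹)) atTop (𝓝 r)) : r ≤ l := by
  set C' := max C 1
  have hC' : 0 < C' := lt_max_of_lt_right one_pos
  have hroot : Tendsto (fun n : ℕ => C' ^ ((n : ℝ)⁻¹) * l) atTop (𝓝 l) := by
    simpa [Real.rpow_zero] using
      (tendsto_const_nhds.rpow (tendsto_inv_atTop_zero.comp tendsto_natCast_atTop_atTop)
        (Or.inl hC'.ne')).mul_const l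
  refine le_of_tendsto_of_tendsto hr hroot ?_
  filter_upwards [eventually_ne_atTop 0] with n hn
  calc ‖a ^ n‖ ^ ((n : ℝ)⁻¹) ≤ (C' * l ^ n) ^ ((n : ℝ)⁻¹) := by
        gcongr
        exact (hC n).trans (by gcongr; exact le_max_left _ _)
    _ = C' ^ ((n : ℝ)⁻¹) * l := by
        rw [Real.mul_rpow hC'.le (by positivity), Real.pow_rpow_inv_natCast hl.le hn]

section Cone

variable {X : Type*} [NormedAddCommGroup X] [NormedSpace ℝ X]

theorem IsCompactOperator.exists_tendsto_inv_norm_smul_pow_apply {T : X →L[ℝ] X}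
    (hT : IsCompactOperator T) {x : X} (hx : ¬BddAbove (range fun n => ‖(T ^ n) x‖)) :
    ∃ z : X, ‖z‖ = 1 ∧ ∃ φ : ℕ → ℕ, Tendsto (fun k => ‖(T ^ φ k) x‖) atTop atTop ∧
      Tendsto (fun k => ‖(T ^ φ k) x‖⁻¹ • (T ^ φ k) x) atTop (𝓝 z) := by
  set s : ℕ → ℝ := fun n => ‖(T ^ n) x‖
  choose m hm_gt hm_lt using fun k : ℕ => exists_lt_succ_of_not_bddAbove hx k
  have hs_pos : ∀ k, 0 < s (m k + 1) := fun k => (Nat.cast_nonneg k).trans_lt (hm_gt k)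
  set y : ℕ → X := fun k => (s (m k + 1))⁻¹ • (T ^ (m k + 1)) x
  have hy_norm : ∀ k, ‖y k‖ = 1 := fun k => by
    simp only [y, norm_smul, norm_inv, Real.norm_of_nonneg (hs_pos k).le]
    exact inv_mul_cancel₀ (hs_pos k).ne'
  have hy_image : ∀ k, y k ∈ T '' Metric.closedBall 0 1 := fun k => by
    refine ⟨(s (m k + 1))⁻¹ • (T ^ m k) x, ?_, ?_⟩
    · rw [mem_closedBall_zero_iff, norm_smul, norm_inv, Real.norm_of_nonneg (hs_pos k).le,
        inv_mul_le_one₀ (hs_pos k)]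
      exact (hm_lt k).le
    · simp only [y, map_smul, pow_succ', mul_apply_eq_comp]
  obtain ⟨S, hS, hsub⟩ := hT.image_closedBall_subset_compact 1
  obtain ⟨z, -, ψ, hψ, hz⟩ := hS.tendsto_subseq fun k => hsub (hy_image k)
  refine ⟨z, ?_, fun k => m (ψ k) + 1, ?_, hz⟩
  · exact tendsto_nhds_unique (hz.norm.congr fun k => hy_norm _) tendsto_const_nhds
  · exact tendsto_atTop_mono (fun k => (Nat.cast_le.2 (hψ.le_apply)).trans (hm_gt (ψ k)).le)
      tendsto_natCast_atTop_atTop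

variable {K : Set X}

theorem exists_smul_sub_mem_and_smul_add_mem_of_mem_interior
    (hKsmul : ∀ l : ℝ, 0 ≤ l → ∀ u ∈ K, l • u ∈ K) {v : X} (hv : v ∈ interior K) (x : X) :
    ∃ c : ℝ, 0 ≤ c ∧ c • v - x ∈ K ∧ c • v + x ∈ K := by
  have hK : K ∈ 𝓝 v := mem_interior_iff_mem_nhds.1 hv
  have hsub : Tendsto (fun ε : ℝ => v - ε • x) (𝓝 0) (𝓝 v) :=
    (by fun_prop : Continuous fun ε : ℝ => v - ε • x).tendsto' 0 v (by simp)
  have hadd : Tendsto (fun ε : ℝ => v + ε • x) (𝓝 0) (𝓝 v) :=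
    (by fun_prop : Continuous fun ε : ℝ => v + ε • x).tendsto' 0 v (by simp)
  obtain ⟨ε, ⟨hεsub, hεadd⟩, hε⟩ :=
    (((hsub.eventually_mem hK).and (hadd.eventually_mem hK)).filter_mono nhdsWithin_le_nhds).and
      (self_mem_nhdsWithin : ∀ᶠ ε in 𝓝[>] (0 : ℝ), 0 < ε) |>.exists
  refine ⟨ε⁻¹, inv_nonneg.2 hε.le, ?_, ?_⟩
  · simpa [smul_sub, smul_smul, hε.ne'] using hKsmul ε⁻¹ (inv_nonneg.2 hε.le) _ hεsub
  · simpa [smul_add, smul_smul, hε.ne'] using hKsmul ε⁻¹ (inv_nonneg.2 hε.le) _ hεadd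

theorem smul_sub_pow_apply_mem (hKadd : ∀ u ∈ K, ∀ v ∈ K, u + v ∈ K)
    (hKsmul : ∀ l : ℝ, 0 ≤ l → ∀ u ∈ K, l • u ∈ K) {T : X →L[ℝ] X} (hTK : ∀ u ∈ K, T u ∈ K)
    {v x : X} (hTv : v - T v ∈ K) {c : ℝ} (hc : 0 ≤ c) (hx : c • v - x ∈ K) (n : ℕ) :
    c • v - (T ^ n) x ∈ K := by
  induction n with
  | zero => simpa using hx
  | succ n ih =>
    have hsplit : c • v - (T ^ (n + 1)) x = c • (v - T v) + T (c • v - (T ^ n) x) := by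
      simp only [pow_succ', mul_apply_eq_comp, map_sub, map_smul, smul_sub]
      abel
    rw [hsplit]
    exact hKadd _ (hKsmul c hc _ hTv) _ (hTK _ ih)

theorem bddAbove_norm_pow_apply_of_order_bounded (hKclosed : IsClosed K)
    (hKsmul : ∀ l : ℝ, 0 ≤ l → ∀ u ∈ K, l • u ∈ K) (hKpt : K ∩ (-K) = {0})
    {T : X →L[ℝ] X} (hT : IsCompactOperator T) {v x : X} {c : ℝ}
    (hx : ∀ n, c • v - (T ^ n) x ∈ K ∧ c • v + (T ^ n) x ∈ K) :
    BddAbove (range fun n => ‖(T ^ n) x‖) := by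
  by_contra hunb
  obtain ⟨z, hz, φ, hs, hy⟩ := hT.exists_tendsto_inv_norm_smul_pow_apply hunb
  have hlim : ∀ σ : ℝ, (∀ n, c • v + σ • (T ^ n) x ∈ K) → σ • z ∈ K := fun σ hσ => by
    have hsv : Tendsto (fun k => (‖(T ^ φ k) x‖⁻¹ * c) • v + σ • (‖(T ^ φ k) x‖⁻¹ • (T ^ φ k) x))
        atTop (𝓝 ((0 * c) • v + σ • z)) :=
      ((hs.inv_tendsto_atTop.mul_const c).smul_const v).add (hy.const_smul σ)
    rw [zero_mul, zero_smul, zero_add] at hsv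
    refine hKclosed.mem_of_tendsto hsv (Eventually.of_forall fun k => ?_)
    rw [mul_smul, smul_comm σ, ← smul_add]
    exact hKsmul _ (inv_nonneg.2 (norm_nonneg _)) _ (hσ _)
  have hzK : z ∈ K ∩ (-K) :=
    ⟨by simpa using hlim 1 fun n => by simpa using (hx n).2,
      by simpa using hlim (-1) fun n => by simpa [sub_eq_add_neg] using (hx n).1⟩
  rw [hKpt, mem_singleton_iff] at hzK
  simp [hzK] at hz

theorem exists_norm_pow_le_of_sub_mem_of_mem_interior [CompleteSpace X] (hKclosed : IsClosed K)
    (hKadd : ∀ u ∈ K, ∀ v ∈ K, u + v ∈ K) (hKsmul : ∀ l : ℝ, 0 ≤ l → ∀ u ∈ K, l • u ∈ K)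
    (hKpt : K ∩ (-K) = {0}) {T : X →L[ℝ] X} (hT : IsCompactOperator T) (hTK : ∀ u ∈ K, T u ∈ K)
    {v : X} (hv : v ∈ interior K) (hTv : v - T v ∈ K) : ∃ C, ∀ n, ‖T ^ n‖ ≤ C := by
  refine banach_steinhaus fun x => ?_
  obtain ⟨c, hc, hsub, hadd⟩ := exists_smul_sub_mem_and_smul_add_mem_of_mem_interior hKsmul hv x
  have horbit : ∀ n, c • v - (T ^ n) x ∈ K ∧ c • v + (T ^ n) x ∈ K := fun n =>
    ⟨smul_sub_pow_apply_mem hKadd hKsmul hTK hTv hc hsub n, by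
      simpa using smul_sub_pow_apply_mem hKadd hKsmul hTK hTv hc (x := -x) (by simpa using hadd) n⟩
  obtain ⟨C, hC⟩ := bddAbove_norm_pow_apply_of_order_bounded hKclosed hKsmul hKpt hT horbit
  exact ⟨C, fun n => hC (mem_range_self n)⟩

end Cone

theorem stmt6_general {X : Type*} [NormedAddCommGroup X] [NormedSpace ℝ X]
    [CompleteSpace X]
    (K : Set X) (hKclosed : IsClosed K)
    (hKadd : ∀ u ∈ K, ∀ v ∈ K, u + v ∈ K)
    (hKsmul : ∀ l : ℝ, 0 ≤ l → ∀ u ∈ K, l • u ∈ K)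
    (hKpt : K ∩ (-K) = {0})
    (L : X →L[ℝ] X) (hLK : ∀ u ∈ K, L u ∈ K)
    (hLcpt : IsCompactOperator (⇑L))
    (l₀ : ℝ) (hl₀ : 0 < l₀)
    (v : X) (hv : v ∈ interior K)
    (hvl : l₀ • v - L v ∈ K)
    (r : ℝ)
    (hr : Filter.Tendsto (fun n : ℕ => ‖L ^ n‖ ^ ((n : ℝ)⁻¹))
      Filter.atTop (nhds r)) :
    r ≤ l₀ := by
  set M : X →L[ℝ] X := l₀⁻¹ • L
  have hMK : ∀ u ∈ K, M u ∈ K := fun u hu => hKsmul _ (inv_nonneg.2 hl₀.le) _ (hLK u hu)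
  have hMv : v - M v ∈ K := by
    simpa [M, smul_sub, smul_smul, hl₀.ne'] using hKsmul _ (inv_nonneg.2 hl₀.le) _ hvl
  obtain ⟨C, hC⟩ := exists_norm_pow_le_of_sub_mem_of_mem_interior hKclosed hKadd hKsmul hKpt
    (hLcpt.smul l₀⁻¹) hMK hv hMv
  refine le_of_tendsto_norm_pow_rpow_inv (C := C) hl₀ (fun n => ?_) hr
  have hMn := hC n
  rw [smul_pow, norm_smul, norm_pow, norm_inv, Real.norm_of_nonneg hl₀.le, inv_pow,
    inv_mul_le_iff₀ (by positivity)] at hMn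
  linarith

/-- Upper bound for the spectral radius: if the compact positive linear
operator `L` satisfies `L v ≤ λ₀ v` for an interior point `v` of the cone
`K`, then `r(L) ≤ λ₀`, where `r(L) = lim ‖Lⁿ‖^(1/n)`. -/
theorem stmt6 {X : Type*} [NormedAddCommGroup X] [NormedSpace ℝ X]
    [CompleteSpace X]
    (K : Set X) (hKclosed : IsClosed K)
    (hKadd : ∀ u ∈ K, ∀ v ∈ K, u + v ∈ K)
    (hKsmul : ∀ l : ℝ, 0 ≤ l → ∀ u ∈ K, l • u ∈ K)
    (hKpt : K ∩ (-K) = {0})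
    (hKint : (interior K).Nonempty)
    (L : X →L[ℝ] X) (hLK : ∀ u ∈ K, L u ∈ K)
    (hLcpt : IsCompactOperator (⇑L))
    (l₀ : ℝ) (hl₀ : 0 < l₀)
    (v : X) (hv : v ∈ interior K)
    (hvl : l₀ • v - L v ∈ K)
    (r : ℝ)
    (hr : Filter.Tendsto (fun n : ℕ => ‖L ^ n‖ ^ ((n : ℝ)⁻¹))
      Filter.atTop (nhds r)) :
    r ≤ l₀ :=
  stmt6_general K hKclosed hKadd hKsmul hKpt L hLK hLcpt l₀ hl₀ v hv hvl r hr
end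

section
/- Under hypotheses (C₁)-(C₂) (continuity-type equicontinuity bound |k(t₁,s)η(s)|/φ(t₁) - |k(t₂,s)η(s)|/φ(t₂)| < ε ω₀(s) for |t₁-t₂| < δ with ω₀φ ∈ L¹, domination |k(t,s)η(s)|/φ(t) ≤ M(s) with Mφ ∈ L¹, and pointwise limits z_±(s) = lim_{t→±∞}|k(t,s)η(s)|/φ(t) with z_±φ ∈ L¹), the linear operator L₁u(t) = ∫_ℝ |k(t,s)η(s)| u(s) ds maps C̃_φ into itself; in particular, for u ∈ C̃_φ, L₁u/φ is continuous and lim_{t→±∞} L₁u(t)/φ(t) = ∫_ℝ z_±(s) u(s) ds exists and is finite. -/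
open MeasureTheory Filter

/-- A function `g : ℝ → ℝ` "extends continuously to `ℝ̄ = [-∞,+∞]`":
it is continuous and has finite limits at `±∞`. -/
def ExtR (g : ℝ → ℝ) : Prop :=
  Continuous g ∧ (∃ a : ℝ, Filter.Tendsto g Filter.atTop (nhds a)) ∧
    (∃ b : ℝ, Filter.Tendsto g Filter.atBot (nhds b))

/-- The space `C̃_φ` of continuous `φ`-extensions to infinity. -/
def Ctilde (φ f : ℝ → ℝ) : Prop :=
  Continuous f ∧ ∃ g : ℝ → ℝ, ExtR g ∧ f = fun t => φ t * g t

lemma extR_bounded {g : ℝ → ℝ} (hg : ExtR g) : ∃ C : ℝ, 0 ≤ C ∧ ∀ x, |g x| ≤ C := by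
  obtain ⟨hgc, ⟨a, hga⟩, ⟨b, hgb⟩⟩ := hg
  obtain ⟨A, hA⟩ := Filter.eventually_atTop.mp (Metric.tendsto_nhds.mp hga 1 one_pos)
  obtain ⟨B, hB⟩ := Filter.eventually_atBot.mp (Metric.tendsto_nhds.mp hgb 1 one_pos)
  obtain ⟨C, hC⟩ := (isCompact_Icc (a := min B A) (b := max B A)).exists_bound_of_continuousOn
    hgc.continuousOn
  refine ⟨max (max C (|a| + 1)) (|b| + 1) ⊔ 0, le_max_right _ _, fun x => ?_⟩
  rcases le_or_gt x (max B A) with hx1 | hx1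
  · rcases le_or_gt (min B A) x with hx2 | hx2
    · exact le_trans (hC x ⟨hx2, hx1⟩) (le_max_of_le_left (le_max_of_le_left (le_max_left _ _)))
    · have hxB : x ≤ B := le_of_lt (lt_of_lt_of_le hx2 (min_le_left _ _))
      have := hB x hxB
      have h1 : |g x| ≤ |b| + 1 := by
        have : |g x - b| < 1 := by simpa [Real.dist_eq] using this
        calc |g x| = |(g x - b) + b| := by ring_nf
          _ ≤ |g x - b| + |b| := abs_add_le _ _
          _ ≤ |b| + 1 := by linarith
      exact le_trans h1 (le_max_of_le_left (le_max_right _ _))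
  · have hxA : A ≤ x := le_of_lt (lt_of_le_of_lt (le_max_right B A) hx1)
    have := hA x hxA
    have h1 : |g x| ≤ |a| + 1 := by
      have : |g x - a| < 1 := by simpa [Real.dist_eq] using this
      calc |g x| = |(g x - a) + a| := by ring_nf
        _ ≤ |g x - a| + |a| := abs_add_le _ _
        _ ≤ |a| + 1 := by linarith
    exact le_trans h1 (le_max_of_le_left (le_max_of_le_left (le_max_right _ _)))

/-- Under (C₁)-(C₂) the operator `L₁u(t) = ∫ |k(t,s)η(s)| u(s) ds` maps
`C̃_φ` into itself; `L₁u/φ` is continuous and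
`lim_{t→±∞} L₁u(t)/φ(t) = ∫ z_±(s) u(s) ds`. -/
theorem stmt8 (φ : ℝ → ℝ) (hφc : Continuous φ) (hφ : ∀ t, 0 < φ t)
    (k : ℝ → ℝ → ℝ) (η : ℝ → ℝ)
    (hmeas : ∀ t, Measurable fun s => k t s * η s)
    (hker : ∀ s, Ctilde φ fun t => k t s * η s)
    -- (C₁): equicontinuity-type bound
    (hC1 : ∀ ε : ℝ, 0 < ε → ∃ δ : ℝ, 0 < δ ∧ ∃ ω : ℝ → ℝ, Measurable ω ∧
      (∀ s, 0 ≤ ω s) ∧ Integrable (fun s => ω s * φ s) ∧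
      ∀ t₁ t₂ : ℝ, |t₁ - t₂| < δ → ∀ s,
        abs (|k t₁ s * η s| / φ t₁ - |k t₂ s * η s| / φ t₂) ≤ ε * ω s)
    -- (C₂): domination and limits
    (M : ℝ → ℝ) (hMdom : ∀ t s, |k t s * η s| / φ t ≤ M s)
    (hMint : Integrable (fun s => M s * φ s))
    (zp zm : ℝ → ℝ)
    (hzp : ∀ s, Tendsto (fun t => |k t s * η s| / φ t) atTop (nhds (zp s)))
    (hzm : ∀ s, Tendsto (fun t => |k t s * η s| / φ t) atBot (nhds (zm s)))
    (hzpint : Integrable (fun s => zp s * φ s))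
    (hzmint : Integrable (fun s => zm s * φ s))
    (u : ℝ → ℝ) (hu : Ctilde φ u) :
    Ctilde φ (fun t => ∫ s, |k t s * η s| * u s) ∧
    Continuous (fun t => (∫ s, |k t s * η s| * u s) / φ t) ∧
    Tendsto (fun t => (∫ s, |k t s * η s| * u s) / φ t) atTop
      (nhds (∫ s, zp s * u s)) ∧
    Tendsto (fun t => (∫ s, |k t s * η s| * u s) / φ t) atBot
      (nhds (∫ s, zm s * u s)) := by
  obtain ⟨huc, g, hgExt, hueq⟩ := hu
  obtain ⟨C, hC0, hC⟩ := extR_bounded hgExt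
  -- bound on u
  have hub : ∀ s, |u s| ≤ C * φ s := by
    intro s
    have : u s = φ s * g s := by rw [hueq]
    rw [this, abs_mul, abs_of_pos (hφ s)]
    calc φ s * |g s| ≤ φ s * C := by
          exact mul_le_mul_of_nonneg_left (hC s) (hφ s).le
      _ = C * φ s := mul_comm _ _
  set F : ℝ → ℝ → ℝ := fun t s => |k t s * η s| / φ t * u s with hF
  have hFmeas : ∀ t, AEStronglyMeasurable (F t) volume := fun t =>
    (((hmeas t).abs.div_const (φ t)).mul huc.measurable).aestronglyMeasurable
  have hbint : Integrable (fun s => M s * φ s * C) := hMint.mul_const C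
  have hFbound : ∀ t s, ‖F t s‖ ≤ M s * φ s * C := by
    intro t s
    have h0 : 0 ≤ |k t s * η s| / φ t := div_nonneg (abs_nonneg _) (hφ t).le
    have hM0 : 0 ≤ M s := le_trans h0 (hMdom t s)
    calc ‖F t s‖ = |k t s * η s| / φ t * |u s| := by
          rw [Real.norm_eq_abs, abs_mul, abs_of_nonneg h0]
      _ ≤ M s * (C * φ s) :=
          mul_le_mul (hMdom t s) (hub s) (abs_nonneg _) hM0
      _ = M s * φ s * C := by ring
  have hFc : ∀ s, Continuous fun t => F t s := by
    intro s
    exact (((hker s).1.abs).div hφc fun t => (hφ t).ne').mul continuous_const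
  set G : ℝ → ℝ := fun t => ∫ s, F t s with hG
  have hGcont : Continuous G := by
    rw [continuous_iff_continuousAt]
    intro t₀
    exact continuousAt_of_dominated (Eventually.of_forall hFmeas)
      (Eventually.of_forall fun t => ae_of_all _ (hFbound t)) hbint
      (ae_of_all _ fun s => (hFc s).continuousAt)
  have hGtop : Tendsto G atTop (nhds (∫ s, zp s * u s)) :=
    tendsto_integral_filter_of_dominated_convergence _
      (Eventually.of_forall hFmeas)
      (Eventually.of_forall fun t => ae_of_all _ (hFbound t)) hbint
      (ae_of_all _ fun s => (hzp s).mul_const (u s))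
  have hGbot : Tendsto G atBot (nhds (∫ s, zm s * u s)) :=
    tendsto_integral_filter_of_dominated_convergence _
      (Eventually.of_forall hFmeas)
      (Eventually.of_forall fun t => ae_of_all _ (hFbound t)) hbint
      (ae_of_all _ fun s => (hzm s).mul_const (u s))
  have key : ∀ t, (∫ s, |k t s * η s| * u s) = φ t * G t := by
    intro t
    have : ∀ s, |k t s * η s| * u s = F t s * φ t := by
      intro s
      rw [hF]
      field_simp
      rw [mul_div_assoc, div_self (hφ t).ne', mul_one]
    simp only [this]
    rw [integral_mul_const]
    ring
  have keyd : (fun t => (∫ s, |k t s * η s| * u s) / φ t) = G := by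
    funext t
    rw [key t]
    exact mul_div_cancel_left₀ _ (hφ t).ne'
  refine ⟨⟨?_, G, ⟨hGcont, ⟨_, hGtop⟩, ⟨_, hGbot⟩⟩, funext key⟩, ?_, ?_, ?_⟩
  · have : (fun t => ∫ s, |k t s * η s| * u s) = fun t => φ t * G t := funext key
    rw [this]; exact hφc.mul hGcont
  · rw [keyd]; exact hGcont
  · rw [keyd]; exact hGtop
  · rw [keyd]; exact hGbot
end

section
/- Under hypotheses (C₁)-(C₂) as above, the linear operator L₁: C̃_φ → C̃_φ, L₁u(t) = ∫_ℝ |k(t,s)η(s)| u(s) ds, is a compact (completely continuous) operator: it maps bounded sets in C̃_φ to relatively compact sets. -/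
open MeasureTheory Filter

/-!
Put `κ(t, s) = |k(t, s) η(s)| / φ(t)`. Each `κ(·, s)` is continuous with limits `z₊(s)`, `z₋(s)`
at `±∞`, so it extends continuously to the compact space `[-∞, +∞] = EReal`, and `|κ| ≤ M`. Since
`|uₙ| ≤ R φ` with `M φ ∈ L¹`, dominated convergence makes `Gₙ(x) = ∫ κ(x, s) uₙ(s) ds` a uniformly
bounded equicontinuous sequence on `EReal`; Arzelà–Ascoli gives a subsequence converging uniformly
to some continuous `F`. On `ℝ` we have `L₁uₙ / φ = Gₙ`, so `L₁u_{g m} → φ F` in `C̃_φ`.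
-/

open Topology

def extendEReal (b : ℝ) (f : ℝ → ℝ) (a : ℝ) : EReal → ℝ :=
  fun x => EReal.rec b f a x

theorem continuous_extendEReal {f : ℝ → ℝ} {a b : ℝ} (hf : Continuous f)
    (hb : Tendsto f atBot (𝓝 b)) (ha : Tendsto f atTop (𝓝 a)) :
    Continuous (extendEReal b f a) := by
  refine continuous_iff_continuousAt.2 fun x => ?_
  induction x with
  | bot =>
    rw [← continuousWithinAt_compl_self, ContinuousWithinAt, EReal.nhdsWithin_bot,
      tendsto_map'_iff]
    exact hb
  | coe t => exact EReal.isOpenEmbedding_coe.continuousAt_iff.1 hf.continuousAt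
  | top =>
    rw [← continuousWithinAt_compl_self, ContinuousWithinAt, EReal.nhdsWithin_top,
      tendsto_map'_iff]
    exact ha

theorem abs_extendEReal_le {f : ℝ → ℝ} {a b c : ℝ} (hf : ∀ t, |f t| ≤ c)
    (hb : Tendsto f atBot (𝓝 b)) (ha : Tendsto f atTop (𝓝 a)) (x : EReal) :
    |extendEReal b f a x| ≤ c := by
  induction x with
  | bot => exact le_of_tendsto' hb.abs hf
  | coe t => exact hf t
  | top => exact le_of_tendsto' ha.abs hf

theorem measurable_extendEReal {α : Type*} [MeasurableSpace α] {κ : ℝ → α → ℝ} {zm zp : α → ℝ}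
    (hκ : ∀ t, Measurable (κ t)) (hzm : ∀ s, Tendsto (fun t => κ t s) atBot (𝓝 (zm s)))
    (hzp : ∀ s, Tendsto (fun t => κ t s) atTop (𝓝 (zp s))) (x : EReal) :
    Measurable fun s => extendEReal (zm s) (fun t => κ t s) (zp s) x := by
  induction x with
  | bot => exact measurable_of_tendsto_metrizable' atBot hκ (tendsto_pi_nhds.2 hzm)
  | coe t => exact hκ t
  | top => exact measurable_of_tendsto_metrizable' atTop hκ (tendsto_pi_nhds.2 hzp)

theorem Continuous.extR_comp_coe {F : EReal → ℝ} (hF : Continuous F) :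
    ExtR fun t : ℝ => F t :=
  ⟨hF.comp continuous_coe_real_ereal, ⟨F ⊤, (hF.tendsto ⊤).comp EReal.tendsto_coe_atTop⟩,
    ⟨F ⊥, (hF.tendsto ⊥).comp EReal.tendsto_coe_atBot⟩⟩

section

variable {α : Type*} [MeasurableSpace α] {μ : Measure α}

theorem abs_integral_mul_le {f g u ρ : α → ℝ} (hf : ∀ s, |f s| ≤ g s) (hu : ∀ s, |u s| ≤ ρ s)
    (hgρ : Integrable (fun s => g s * ρ s) μ) :
    |∫ s, f s * u s ∂μ| ≤ ∫ s, g s * ρ s ∂μ := by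
  rw [← Real.norm_eq_abs]
  refine norm_integral_le_of_norm_le hgρ <| Eventually.of_forall fun s => ?_
  rw [norm_mul, Real.norm_eq_abs, Real.norm_eq_abs]
  exact mul_le_mul (hf s) (hu s) (abs_nonneg _) ((abs_nonneg _).trans (hf s))

theorem integrable_mul_of_abs_le {f g u ρ : α → ℝ} (hf_meas : AEStronglyMeasurable f μ)
    (hu_meas : AEStronglyMeasurable u μ) (hf : ∀ s, |f s| ≤ g s) (hu : ∀ s, |u s| ≤ ρ s)
    (hgρ : Integrable (fun s => g s * ρ s) μ) : Integrable (fun s => f s * u s) μ :=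
  hgρ.mono' (hf_meas.mul hu_meas) <| Eventually.of_forall fun s => by
    rw [norm_mul, Real.norm_eq_abs, Real.norm_eq_abs]
    exact mul_le_mul (hf s) (hu s) (abs_nonneg _) ((abs_nonneg _).trans (hf s))

variable {X : Type*} [TopologicalSpace X] {K : X → α → ℝ} {M ρ : α → ℝ} {u : ℕ → α → ℝ}

theorem equicontinuous_integral_mul [FirstCountableTopology X]
    (hK_meas : ∀ x, AEStronglyMeasurable (K x) μ) (hK_cont : ∀ s, Continuous fun x => K x s)
    (hK_le : ∀ x s, |K x s| ≤ M s) (hρ : AEStronglyMeasurable ρ μ)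
    (hMρ : Integrable (fun s => M s * ρ s) μ)
    (hu_meas : ∀ n, AEStronglyMeasurable (u n) μ) (hu_le : ∀ n s, |u n s| ≤ ρ s) :
    Equicontinuous fun n x => ∫ s, K x s * u n s ∂μ := by
  intro x₀
  have hρ_nonneg : ∀ s, 0 ≤ ρ s := fun s => (abs_nonneg _).trans (hu_le 0 s)
  have hdom : ∀ x s, ‖|K x s - K x₀ s| * ρ s‖ ≤ 2 * (M s * ρ s) := fun x s => by
    rw [norm_mul, norm_abs_eq_norm, Real.norm_eq_abs, Real.norm_eq_abs, abs_of_nonneg (hρ_nonneg s)]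
    have := (abs_sub _ _).trans (add_le_add (hK_le x s) (hK_le x₀ s))
    nlinarith [hρ_nonneg s]
  have hmod : Tendsto (fun x => ∫ s, |K x s - K x₀ s| * ρ s ∂μ) (𝓝 x₀) (𝓝 0) := by
    simpa using tendsto_integral_filter_of_dominated_convergence _
      (Eventually.of_forall fun x => ((hK_meas x).sub (hK_meas x₀)).norm.mul hρ)
      (Eventually.of_forall fun x => Eventually.of_forall (hdom x)) (hMρ.const_mul 2)
      (Eventually.of_forall fun s =>
        ((((hK_cont s).tendsto x₀).sub_const (K x₀ s)).abs.mul_const (ρ s)))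
  have hint := fun x n =>
    integrable_mul_of_abs_le (hK_meas x) (hu_meas n) (hK_le x) (hu_le n) hMρ
  rw [Metric.equicontinuousAt_iff_right]
  intro ε hε
  filter_upwards [hmod.eventually (gt_mem_nhds hε)] with x hx n
  rw [dist_comm, Real.dist_eq, ← integral_sub (hint x n) (hint x₀ n)]
  calc |∫ s, K x s * u n s - K x₀ s * u n s ∂μ|
      = |∫ s, (K x s - K x₀ s) * u n s ∂μ| := by simp only [sub_mul]
    _ ≤ ∫ s, |K x s - K x₀ s| * ρ s ∂μ :=
        abs_integral_mul_le (fun s => le_rfl) (hu_le n)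
          ((hMρ.const_mul 2).mono' (((hK_meas x).sub (hK_meas x₀)).norm.mul hρ)
            (Eventually.of_forall (hdom x)))
    _ < ε := hx

end

theorem Equicontinuous.exists_subseq_tendstoUniformly {X : Type*} [TopologicalSpace X]
    [CompactSpace X] {G : ℕ → X → ℝ} (hG : Equicontinuous G) {C : ℝ}
    (hC : ∀ n x, |G n x| ≤ C) :
    ∃ g : ℕ → ℕ, StrictMono g ∧ ∃ F : C(X, ℝ), TendstoUniformly (fun m => G (g m)) F atTop := by
  let G' : ℕ → BoundedContinuousFunction X ℝ := fun n => .mkOfCompact ⟨G n, hG.continuous n⟩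
  have hcpt : IsCompact (closure (Set.range G')) := by
    refine BoundedContinuousFunction.arzela_ascoli (Set.Icc (-C) C) isCompact_Icc _ ?_ ?_
    · rintro _ x ⟨n, rfl⟩
      exact abs_le.1 (hC n x)
    · exact fun x₀ U hU => (hG x₀ U hU).mono fun x hx ⟨_, n, rfl⟩ => hx n
  obtain ⟨F, -, g, hg, hlim⟩ := hcpt.tendsto_subseq fun n => subset_closure ⟨n, rfl⟩
  exact ⟨g, hg, F.toContinuousMap, BoundedContinuousFunction.tendsto_iff_tendstoUniformly.1 hlim⟩

theorem TendstoUniformly.tendsto_iSup_abs_sub {ι X : Type*} {l : Filter ι} {F : ι → X → ℝ}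
    {f : X → ℝ} (h : TendstoUniformly F f l) :
    Tendsto (fun i => ⨆ x, |F i x - f x|) l (𝓝 0) := by
  refine Metric.tendsto_nhds.2 fun ε hε => ?_
  filter_upwards [Metric.tendstoUniformly_iff.1 h (ε / 2) (half_pos hε)] with i hi
  have hsup : ⨆ x, |F i x - f x| ≤ ε / 2 := Real.iSup_le (fun x => by
    rw [abs_sub_comm, ← Real.dist_eq]; exact (hi x).le) (half_pos hε).le
  rw [Real.dist_eq, sub_zero, abs_of_nonneg (Real.iSup_nonneg fun x => abs_nonneg _)]
  linarith

theorem exists_subseq_tendstoUniformly_integral_mul {α : Type*} [MeasurableSpace α]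
    {μ : Measure α} {κ : ℝ → α → ℝ} {M ρ zm zp : α → ℝ} {u : ℕ → α → ℝ}
    (hκ_meas : ∀ t, Measurable (κ t)) (hκ_cont : ∀ s, Continuous fun t => κ t s)
    (hzm : ∀ s, Tendsto (fun t => κ t s) atBot (𝓝 (zm s)))
    (hzp : ∀ s, Tendsto (fun t => κ t s) atTop (𝓝 (zp s)))
    (hκ_le : ∀ t s, |κ t s| ≤ M s) (hρ : AEStronglyMeasurable ρ μ)
    (hMρ : Integrable (fun s => M s * ρ s) μ)
    (hu_meas : ∀ n, AEStronglyMeasurable (u n) μ) (hu_le : ∀ n s, |u n s| ≤ ρ s) :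
    ∃ g : ℕ → ℕ, StrictMono g ∧ ∃ F : C(EReal, ℝ),
      TendstoUniformly (fun m (t : ℝ) => ∫ s, κ t s * u (g m) s ∂μ) (fun t => F t) atTop := by
  set K : EReal → α → ℝ := fun x s => extendEReal (zm s) (fun t => κ t s) (zp s) x
  have hK_le : ∀ x s, |K x s| ≤ M s := fun x s =>
    abs_extendEReal_le (fun t => hκ_le t s) (hzm s) (hzp s) x
  have hequi : Equicontinuous fun n x => ∫ s, K x s * u n s ∂μ :=
    equicontinuous_integral_mul
      (fun x => (measurable_extendEReal hκ_meas hzm hzp x).aestronglyMeasurable)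
      (fun s => continuous_extendEReal (hκ_cont s) (hzm s) (hzp s)) hK_le hρ hMρ hu_meas hu_le
  obtain ⟨g, hg, F, hF⟩ := hequi.exists_subseq_tendstoUniformly fun n x =>
    abs_integral_mul_le (hK_le x) (hu_le n) hMρ
  exact ⟨g, hg, F, hF.comp ((↑) : ℝ → EReal)⟩

theorem stmt9_general (φ : ℝ → ℝ) (hφc : Continuous φ) (hφ : ∀ t, 0 < φ t)
    (k : ℝ → ℝ → ℝ) (η : ℝ → ℝ)
    (hmeas : ∀ t, Measurable fun s => k t s * η s)
    (hker : ∀ s, Ctilde φ fun t => k t s * η s)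
    -- (C₂): domination and limits
    (M : ℝ → ℝ) (hMdom : ∀ t s, |k t s * η s| / φ t ≤ M s)
    (hMint : Integrable (fun s => M s * φ s))
    (zp zm : ℝ → ℝ)
    (hzp : ∀ s, Tendsto (fun t => |k t s * η s| / φ t) atTop (nhds (zp s)))
    (hzm : ∀ s, Tendsto (fun t => |k t s * η s| / φ t) atBot (nhds (zm s)))
    -- a `‖·‖_φ`-bounded sequence in `C̃_φ`
    (u : ℕ → ℝ → ℝ) (hu : ∀ n, Ctilde φ (u n))
    (R : ℝ) (hR : ∀ n t, |u n t| ≤ R * φ t) :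
    ∃ g : ℕ → ℕ, StrictMono g ∧ ∃ v : ℝ → ℝ, Ctilde φ v ∧
      Tendsto (fun m => ⨆ t : ℝ, |(∫ s, |k t s * η s| * u (g m) s) - v t| / φ t)
        atTop (nhds 0) := by
  have hMρ : Integrable (fun s => M s * (R * φ s)) := by
    simpa only [mul_left_comm] using hMint.const_mul R
  obtain ⟨g, hg, F, hF⟩ := exists_subseq_tendstoUniformly_integral_mul
    (κ := fun t s => |k t s * η s| / φ t) (fun t => (hmeas t).abs.div_const _)
    (fun s => (hker s).1.abs.div hφc fun t => (hφ t).ne') hzm hzp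
    (fun t s => by rw [abs_div, abs_abs, abs_of_pos (hφ t)]; exact hMdom t s)
    (hφc.const_mul R).aestronglyMeasurable hMρ (fun n => (hu n).1.aestronglyMeasurable) hR
  refine ⟨g, hg, fun t => φ t * F t,
    ⟨hφc.mul (F.continuous.comp continuous_coe_real_ereal), _, F.continuous.extR_comp_coe, rfl⟩,
    ?_⟩
  have hweight : ∀ m (t : ℝ), |(∫ s, |k t s * η s| * u (g m) s) - φ t * F t| / φ t
      = |(∫ s, |k t s * η s| / φ t * u (g m) s) - F t| := fun m t => by
    simp only [div_mul_eq_mul_div, integral_div]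
    rw [div_sub' (hφ t).ne', abs_div, abs_of_pos (hφ t)]
  simpa only [hweight] using hF.tendsto_iSup_abs_sub

/-- Under (C₁)-(C₂) the operator `L₁u(t) = ∫ |k(t,s)η(s)| u(s) ds` is compact
on `C̃_φ`: the image of any `‖·‖_φ`-bounded sequence has a subsequence whose
image converges in `C̃_φ`. -/
theorem stmt9 (φ : ℝ → ℝ) (hφc : Continuous φ) (hφ : ∀ t, 0 < φ t)
    (k : ℝ → ℝ → ℝ) (η : ℝ → ℝ)
    (hmeas : ∀ t, Measurable fun s => k t s * η s)
    (hker : ∀ s, Ctilde φ fun t => k t s * η s)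
    -- (C₁): equicontinuity-type bound
    (hC1 : ∀ ε : ℝ, 0 < ε → ∃ δ : ℝ, 0 < δ ∧ ∃ ω : ℝ → ℝ, Measurable ω ∧
      (∀ s, 0 ≤ ω s) ∧ Integrable (fun s => ω s * φ s) ∧
      ∀ t₁ t₂ : ℝ, |t₁ - t₂| < δ → ∀ s,
        abs (|k t₁ s * η s| / φ t₁ - |k t₂ s * η s| / φ t₂) ≤ ε * ω s)
    -- (C₂): domination and limits
    (M : ℝ → ℝ) (hMdom : ∀ t s, |k t s * η s| / φ t ≤ M s)
    (hMint : Integrable (fun s => M s * φ s))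
    (zp zm : ℝ → ℝ)
    (hzp : ∀ s, Tendsto (fun t => |k t s * η s| / φ t) atTop (nhds (zp s)))
    (hzm : ∀ s, Tendsto (fun t => |k t s * η s| / φ t) atBot (nhds (zm s)))
    (hzpint : Integrable (fun s => zp s * φ s))
    (hzmint : Integrable (fun s => zm s * φ s))
    -- a `‖·‖_φ`-bounded sequence in `C̃_φ`
    (u : ℕ → ℝ → ℝ) (hu : ∀ n, Ctilde φ (u n))
    (R : ℝ) (hR : ∀ n t, |u n t| ≤ R * φ t) :
    ∃ g : ℕ → ℕ, StrictMono g ∧ ∃ v : ℝ → ℝ, Ctilde φ v ∧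
      Tendsto (fun m => ⨆ t : ℝ, |(∫ s, |k t s * η s| * u (g m) s) - v t| / φ t)
        atTop (nhds 0) :=
  stmt9_general φ hφc hφ k η hmeas hker M hMdom hMint zp zm hzp hzm u hu R hR
end

section
/- Suppose A ⊆ ℝ is a finite union of compact intervals with k(t,s)η(s) ≥ 0 for t ∈ A and a.e. s, and inf_{t∈A} ∫_A k(t,s)η(s) ds = 1/M̃ > 0. If L₁ is the compact linear operator L₁u(t) = ∫_ℝ |k(t,s)η(s)| u(s) ds on C̃_φ mapping the cone P of nonnegative functions into itself, then the spectral radius satisfies r(L₁) ≥ 1/(2M̃) > 0. -/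
open MeasureTheory Filter

private lemma aux_bdd {g : ℝ → ℝ} (hc : Continuous g)
    (ha : ∃ a, Tendsto g atTop (nhds a)) (hb : ∃ b, Tendsto g atBot (nhds b)) :
    ∃ C : ℝ, ∀ t, |g t| ≤ C := by
  obtain ⟨a, ha⟩ := ha
  obtain ⟨b, hb⟩ := hb
  obtain ⟨T1, hT1⟩ := (Metric.tendsto_atTop.mp ha) 1 one_pos
  have hb' : Tendsto (fun t : ℝ => g (-t)) atTop (nhds b) := hb.comp tendsto_neg_atTop_atBot
  obtain ⟨T2, hT2⟩ := (Metric.tendsto_atTop.mp hb') 1 one_pos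
  obtain ⟨C3, hC3⟩ := (isCompact_Icc (a := -T2) (b := T1)).exists_bound_of_continuousOn
    hc.continuousOn
  refine ⟨max (|a| + 1) (max (|b| + 1) C3), fun t => ?_⟩
  rcases le_total t (-T2) with h | h
  · have h2 := hT2 (-t) (by linarith)
    rw [Real.dist_eq, neg_neg] at h2
    have : |g t| ≤ |b| + 1 := by
      have := abs_sub_abs_le_abs_sub (g t) b
      linarith
    exact this.trans (le_max_of_le_right (le_max_left _ _))
  rcases le_total T1 t with h' | h'
  · have h2 := hT1 t h'
    rw [Real.dist_eq] at h2
    have : |g t| ≤ |a| + 1 := by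
      have := abs_sub_abs_le_abs_sub (g t) a
      linarith
    exact this.trans (le_max_left _ _)
  · have h2 := hC3 t ⟨h, h'⟩
    rw [Real.norm_eq_abs] at h2
    exact h2.trans (le_max_of_le_right (le_max_right _ _))

/-- If `A` is a finite union of compact intervals on which the kernel is
nonnegative with `inf_{t∈A} ∫_A k(t,s)η(s) ds = 1/M̃ > 0`, then the compact
positive linear operator `L₁u(t) = ∫_ℝ |k(t,s)η(s)| u(s) ds` on `C̃_φ` has
spectral radius `r(L₁) ≥ 1/(2M̃) > 0`.
The Banach space `X` is a realization of `C̃_φ` via the representation `ev`. -/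
theorem stmt10 {X : Type*} [NormedAddCommGroup X] [NormedSpace ℝ X]
    [CompleteSpace X]
    (φ : ℝ → ℝ) (hφc : Continuous φ) (hφ : ∀ t, 0 < φ t)
    (ev : X →ₗ[ℝ] (ℝ → ℝ)) (hinj : Function.Injective ev)
    (hnorm : ∀ x : X, ‖x‖ = ⨆ t : ℝ, |ev x t| / φ t)
    (hev : ∀ x : X, Ctilde φ (ev x))
    (hsurj : ∀ f : ℝ → ℝ, Ctilde φ f → ∃ x : X, ev x = f)
    (k : ℝ → ℝ → ℝ) (η : ℝ → ℝ)
    (L : X →L[ℝ] X)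
    (hL : ∀ x : X, ∀ t : ℝ, ev (L x) t = ∫ s, |k t s * η s| * ev x s)
    (hLP : ∀ x : X, (∀ t, 0 ≤ ev x t) → ∀ t, 0 ≤ ev (L x) t)
    (hcpt : IsCompactOperator (⇑L))
    (A : Set ℝ)
    (hA : ∃ (n : ℕ) (a b : Fin n → ℝ), (∀ i, a i ≤ b i) ∧
      A = ⋃ i, Set.Icc (a i) (b i))
    (hknn : ∀ t ∈ A, ∀ᵐ s : ℝ, 0 ≤ k t s * η s)
    (Mt : ℝ) (hMt : 0 < Mt)
    (hinf : IsGLB ((fun t => ∫ s in A, k t s * η s) '' A) (1 / Mt))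
    (r : ℝ)
    (hr : Tendsto (fun n : ℕ => ‖L ^ n‖ ^ ((n : ℝ)⁻¹)) atTop (nhds r)) :
    0 < 1 / (2 * Mt) ∧ 1 / (2 * Mt) ≤ r := by
  have hc : 0 < 1 / (2 * Mt) := by positivity
  refine ⟨hc, ?_⟩
  set c : ℝ := 1 / (2 * Mt) with hcdef
  obtain ⟨N, a, b, hab, hAeq⟩ := hA
  have hAcpt : IsCompact A := by
    rw [hAeq]; exact isCompact_iUnion fun i => isCompact_Icc
  have hAmeas : MeasurableSet A := by
    rw [hAeq]; exact MeasurableSet.iUnion fun i => measurableSet_Icc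
  have hAne : A.Nonempty := by
    by_contra h
    rw [Set.not_nonempty_iff_eq_empty] at h
    rw [h] at hinf
    simp only [Set.image_empty] at hinf
    have h2 := hinf.2 (show (1 / Mt + 1) ∈ lowerBounds (∅ : Set ℝ) from
      fun y hy => absurd hy (Set.notMem_empty y))
    linarith
  -- the open core of A
  set O : Set ℝ := ⋃ i, Set.Ioo (a i) (b i) with hOdef
  have hOopen : IsOpen O := isOpen_iUnion fun i => isOpen_Ioo
  have hOA : O ⊆ A := by
    rw [hAeq]; exact Set.iUnion_mono fun i => Set.Ioo_subset_Icc_self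
  have hAOnull : volume (A \ O) = 0 := by
    have hsub : A \ O ⊆ ⋃ i, ({a i, b i} : Set ℝ) := by
      rintro s ⟨hsA, hsO⟩
      rw [hAeq] at hsA
      obtain ⟨i, hi⟩ := Set.mem_iUnion.1 hsA
      refine Set.mem_iUnion.2 ⟨i, ?_⟩
      have hnot : s ∉ Set.Ioo (a i) (b i) := fun hmem => hsO (Set.mem_iUnion.2 ⟨i, hmem⟩)
      rcases eq_or_lt_of_le hi.1 with h1 | h1
      · exact Or.inl h1.symm
      rcases eq_or_lt_of_le hi.2 with h2 | h2
      · exact Or.inr h2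
      exact absurd ⟨h1, h2⟩ hnot
    refine measure_mono_null hsub (measure_iUnion_null fun i => ?_)
    exact Set.Countable.measure_zero ((Set.countable_singleton _).insert _) _
  -- integrability of the kernel on A
  have hker : ∀ t ∈ A, IntegrableOn (fun s => k t s * η s) A := by
    intro t ht
    by_contra hni
    have h0 : ∫ s in A, k t s * η s = 0 := integral_undef hni
    have h1 : 1 / Mt ≤ ∫ s in A, k t s * η s := hinf.1 ⟨t, ht, rfl⟩
    rw [h0] at h1
    have : (0:ℝ) < 1 / Mt := by positivity
    linarith
  -- cutoff functions
  set f : ℕ → ℝ → ℝ := fun m s => min 1 (m * Metric.infDist s Oᶜ) with hfdef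
  have hfcont : ∀ m, Continuous (f m) := fun m =>
    continuous_const.min (continuous_const.mul (Metric.continuous_infDist_pt _))
  have hfnn : ∀ m s, 0 ≤ f m s := fun m s =>
    le_min zero_le_one (mul_nonneg m.cast_nonneg Metric.infDist_nonneg)
  have hfle1 : ∀ m s, f m s ≤ 1 := fun m s => min_le_left _ _
  have hfO : ∀ m s, s ∉ O → f m s = 0 := by
    intro m s hs
    have h0 : Metric.infDist s Oᶜ = 0 := Metric.infDist_zero_of_mem hs
    simp [hfdef, h0]
  have hfmono : ∀ m m' : ℕ, m ≤ m' → ∀ s, f m s ≤ f m' s := fun m m' h s =>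
    min_le_min le_rfl (mul_le_mul_of_nonneg_right (Nat.cast_le.2 h) Metric.infDist_nonneg)
  have hflim : ∀ s ∈ O, ∃ M0 : ℕ, ∀ m ≥ M0, f m s = 1 := by
    intro s hs
    have hne : (Oᶜ : Set ℝ).Nonempty := by
      obtain ⟨R, hR⟩ := hAcpt.isBounded.subset_closedBall 0
      refine ⟨|R| + 1, fun hmem => ?_⟩
      have h1 := hR (hOA hmem)
      rw [Metric.mem_closedBall, Real.dist_eq, sub_zero] at h1
      have h2 : |R| + 1 ≤ |(|R| + 1)| := le_abs_self _
      have h3 : R ≤ |R| := le_abs_self _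
      linarith
    have hd : 0 < Metric.infDist s Oᶜ :=
      (hOopen.isClosed_compl.notMem_iff_infDist_pos hne).1 (by simpa using hs)
    refine ⟨⌈(Metric.infDist s Oᶜ)⁻¹⌉₊, fun m hm => ?_⟩
    have h1 : (Metric.infDist s Oᶜ)⁻¹ ≤ (m : ℝ) := (Nat.ceil_le.1 hm).trans le_rfl
    have h2 : (1:ℝ) ≤ m * Metric.infDist s Oᶜ := by
      rw [← inv_mul_cancel₀ hd.ne']
      exact mul_le_mul_of_nonneg_right h1 hd.le
    simp [hfdef, min_eq_left h2]
  -- the cutoffs belong to Ctilde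
  have hCt : ∀ m, Ctilde φ (f m) := by
    intro m
    obtain ⟨R, hR⟩ := hAcpt.isBounded.subset_closedBall 0
    have hvanish : ∀ t : ℝ, |t| > R → f m t = 0 := by
      intro t ht
      refine hfO m t fun hmem => ?_
      have h1 := hR (hOA hmem)
      rw [Metric.mem_closedBall, Real.dist_eq, sub_zero] at h1
      linarith
    refine ⟨hfcont m, fun t => f m t / φ t,
      ⟨(hfcont m).div hφc fun t => (hφ t).ne', ⟨0, ?_⟩, ⟨0, ?_⟩⟩, ?_⟩
    · refine Tendsto.congr' ?_ tendsto_const_nhds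
      filter_upwards [eventually_gt_atTop R] with t ht
      have : |t| > R := lt_of_lt_of_le ht (le_abs_self t)
      rw [hvanish t this, zero_div]
    · refine Tendsto.congr' ?_ tendsto_const_nhds
      filter_upwards [eventually_lt_atBot (-R)] with t ht
      have : |t| > R := by
        have := neg_abs_le t
        linarith
      rw [hvanish t this, zero_div]
    · funext t
      rw [mul_comm, div_mul_cancel₀ _ (hφ t).ne']
  -- realize the cutoffs in X
  have hxex : ∀ m : ℕ, ∃ x : X, ev x = f m := fun m => hsurj _ (hCt m)
  choose x hx using hxex
  -- monotonicity of L applied to cutoffs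
  have hLmono : ∀ m m' : ℕ, m ≤ m' → ∀ t, ev (L (x m)) t ≤ ev (L (x m')) t := by
    intro m m' h t
    have h1 : ∀ u, 0 ≤ ev (x m' - x m) u := by
      intro u
      rw [map_sub]
      simp only [Pi.sub_apply, hx]
      linarith [hfmono m m' h u]
    have h2 := hLP _ h1 t
    rw [map_sub, map_sub] at h2
    simp only [Pi.sub_apply] at h2
    linarith
  -- integral formula over A
  have hFform : ∀ m : ℕ, ∀ t ∈ A, ev (L (x m)) t = ∫ s in A, (k t s * η s) * f m s := by
    intro m t ht
    rw [hL (x m) t]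
    have h1 : (fun s => |k t s * η s| * ev (x m) s)
        =ᵐ[volume] A.indicator (fun s => (k t s * η s) * f m s) := by
      filter_upwards [hknn t ht] with s hs
      rw [hx, abs_of_nonneg hs]
      by_cases hsA : s ∈ A
      · rw [Set.indicator_of_mem hsA]
      · rw [Set.indicator_of_notMem hsA, hfO m s fun hmem => hsA (hOA hmem), mul_zero]
    rw [integral_congr_ae h1, integral_indicator hAmeas]
  -- dominated convergence
  have hFtend : ∀ t ∈ A, Tendsto (fun m => ∫ s in A, (k t s * η s) * f m s) atTop
      (nhds (∫ s in A, k t s * η s)) := by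
    intro t ht
    have hint := hker t ht
    have key : Tendsto (fun m => ∫ s in A, (k t s * η s) * f m s) atTop
        (nhds (∫ s in A, (k t s * η s) * O.indicator (fun _ => (1:ℝ)) s)) := by
      refine tendsto_integral_of_dominated_convergence (fun s => |k t s * η s|)
        (fun m => hint.aestronglyMeasurable.mul (hfcont m).aestronglyMeasurable)
        hint.abs ?_ ?_
      · intro m
        refine Eventually.of_forall fun s => ?_
        rw [Real.norm_eq_abs, abs_mul]
        refine mul_le_of_le_one_right (abs_nonneg _) ?_
        rw [abs_of_nonneg (hfnn m s)]
        exact hfle1 m s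
      · refine Eventually.of_forall fun s => ?_
        by_cases hs : s ∈ O
        · obtain ⟨M0, hM0⟩ := hflim s hs
          rw [Set.indicator_of_mem hs, mul_one]
          exact tendsto_atTop_of_eventually_const (i₀ := M0) fun m hm => by rw [hM0 m hm, mul_one]
        · rw [Set.indicator_of_notMem hs, mul_zero]
          exact tendsto_atTop_of_eventually_const (i₀ := 0) fun m _ => by
            rw [hfO m s hs, mul_zero]
    have heq : ∫ s in A, (k t s * η s) * O.indicator (fun _ => (1:ℝ)) s
        = ∫ s in A, k t s * η s := by
      have h2 : (fun s => (k t s * η s) * O.indicator (fun _ => (1:ℝ)) s)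
          = O.indicator (fun s => k t s * η s) := by
        funext s
        by_cases hs : s ∈ O <;> simp [hs]
      rw [h2, setIntegral_indicator hOopen.measurableSet]
      refine setIntegral_congr_set (MeasureTheory.ae_eq_set.2 ⟨?_, ?_⟩)
      · have he : (A ∩ O) \ A = ∅ := Set.diff_eq_empty.2 Set.inter_subset_left
        rw [he]; simp
      · rw [Set.diff_self_inter]; exact hAOnull
    rw [← heq]
    exact key
  -- Dini-type argument: one cutoff works uniformly on A
  have hclt : c < 1 / Mt := by
    rw [hcdef, div_lt_div_iff₀ (by linarith) hMt]
    nlinarith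
  have hUopen : ∀ m : ℕ, IsOpen {t : ℝ | c < ev (L (x m)) t} :=
    fun m => isOpen_lt continuous_const (hev (L (x m))).1
  have hcover : A ⊆ ⋃ m : ℕ, {t : ℝ | c < ev (L (x m)) t} := by
    intro t ht
    have h1 : 1 / Mt ≤ ∫ s in A, k t s * η s := hinf.1 ⟨t, ht, rfl⟩
    have h2 : c < ∫ s in A, k t s * η s := lt_of_lt_of_le hclt h1
    have h3 := (hFtend t ht).eventually_const_lt h2
    obtain ⟨m, hm⟩ := h3.exists
    refine Set.mem_iUnion.2 ⟨m, ?_⟩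
    show c < ev (L (x m)) t
    rw [hFform m t ht]
    exact hm
  obtain ⟨I, hI⟩ := hAcpt.elim_finite_subcover _ hUopen hcover
  set Nm : ℕ := I.sup id with hNm
  have hbig : ∀ t ∈ A, c < ev (L (x Nm)) t := by
    intro t ht
    obtain ⟨i, hiI, hti⟩ := Set.mem_iUnion₂.1 (hI ht)
    exact lt_of_lt_of_le hti (hLmono i Nm (Finset.le_sup (f := id) hiI) t)
  -- the key pointwise inequality  L x ≥ c · f
  have hkey : ∀ t, c * f Nm t ≤ ev (L (x Nm)) t := by
    intro t
    by_cases ht : t ∈ A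
    · calc c * f Nm t ≤ c * 1 := mul_le_mul_of_nonneg_left (hfle1 Nm t) hc.le
        _ = c := mul_one c
        _ ≤ ev (L (x Nm)) t := (hbig t ht).le
    · rw [hfO Nm t fun hmem => ht (hOA hmem), mul_zero]
      exact hLP (x Nm) (fun u => by rw [hx]; exact hfnn Nm u) t
  -- a point where the cutoff is positive
  obtain ⟨t0, ht0⟩ : ∃ t0, 0 < f Nm t0 := by
    by_contra h
    push_neg at h
    have hzero : ∀ s, f Nm s = 0 := fun s => le_antisymm (h s) (hfnn Nm s)
    obtain ⟨t1, ht1⟩ := hAne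
    have h1 := hbig t1 ht1
    rw [hFform Nm t1 ht1] at h1
    have h2 : ∫ s in A, (k t1 s * η s) * f Nm s = 0 := by
      simp [hzero]
    rw [h2] at h1
    linarith
  -- iterate
  have hiter : ∀ n : ℕ, ∀ t, c ^ n * f Nm t ≤ ev ((L ^ n) (x Nm)) t := by
    intro n
    induction n with
    | zero =>
      intro t
      simp only [pow_zero, one_mul, ContinuousLinearMap.one_def, ContinuousLinearMap.id_apply]
      rw [hx]
    | succ n ih =>
      intro t
      have hz : ∀ u, 0 ≤ ev ((L ^ n) (x Nm) - (c ^ n) • (x Nm)) u := by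
        intro u
        rw [map_sub, _root_.map_smul]
        simp only [Pi.sub_apply, Pi.smul_apply, smul_eq_mul, hx]
        linarith [ih u]
      have h2 := hLP _ hz t
      rw [map_sub, _root_.map_smul, map_sub, _root_.map_smul] at h2
      simp only [Pi.sub_apply, Pi.smul_apply, smul_eq_mul] at h2
      have h3 : c ^ n * (c * f Nm t) ≤ c ^ n * ev (L (x Nm)) t :=
        mul_le_mul_of_nonneg_left (hkey t) (pow_nonneg hc.le n)
      have h4 : (L ^ (n + 1)) (x Nm) = L ((L ^ n) (x Nm)) := by
        rw [pow_succ']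
        rfl
      rw [h4]
      calc c ^ (n + 1) * f Nm t = c ^ n * (c * f Nm t) := by ring
        _ ≤ c ^ n * ev (L (x Nm)) t := h3
        _ ≤ ev (L ((L ^ n) (x Nm))) t := by linarith
  -- norm estimates
  have hsup : ∀ (y : X) (t : ℝ), |ev y t| / φ t ≤ ‖y‖ := by
    intro y t
    rw [hnorm y]
    refine le_ciSup (f := fun t => |ev y t| / φ t) ?_ t
    obtain ⟨-, g, ⟨hgc, hga, hgb⟩, hyg⟩ := hev y
    obtain ⟨C, hC⟩ := aux_bdd hgc hga hgb
    refine ⟨C, fun v hv => ?_⟩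
    obtain ⟨t', rfl⟩ := hv
    rw [hyg]
    simp only
    rw [abs_mul, abs_of_pos (hφ t'), mul_comm, mul_div_assoc, div_self (hφ t').ne', mul_one]
    exact hC t'
  have hxn : 0 < ‖x Nm‖ := by
    rw [norm_pos_iff]
    intro h0
    have h1 : ev (x Nm) t0 = f Nm t0 := by rw [hx]
    rw [h0, map_zero] at h1
    simp only [Pi.zero_apply] at h1
    linarith
  set K : ℝ := f Nm t0 / (φ t0 * ‖x Nm‖) with hK
  have hKpos : 0 < K := div_pos ht0 (mul_pos (hφ t0) hxn)
  have hopn : ∀ n : ℕ, c ^ n * K ≤ ‖L ^ n‖ := by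
    intro n
    have h1 : c ^ n * f Nm t0 ≤ ev ((L ^ n) (x Nm)) t0 := hiter n t0
    have h3 := hsup ((L ^ n) (x Nm)) t0
    have h4 : ‖(L ^ n) (x Nm)‖ ≤ ‖L ^ n‖ * ‖x Nm‖ := (L ^ n).le_opNorm _
    have h5 : c ^ n * f Nm t0 / φ t0 ≤ ‖L ^ n‖ * ‖x Nm‖ := by
      calc c ^ n * f Nm t0 / φ t0 ≤ |ev ((L ^ n) (x Nm)) t0| / φ t0 := by
            gcongr
            · exact (hφ t0).le
            · exact h1.trans (le_abs_self _)
        _ ≤ ‖(L ^ n) (x Nm)‖ := h3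
        _ ≤ ‖L ^ n‖ * ‖x Nm‖ := h4
    have h6 := (div_le_iff₀ (hφ t0)).1 h5
    rw [hK, ← mul_div_assoc, div_le_iff₀ (mul_pos (hφ t0) hxn),
      show ‖L ^ n‖ * (φ t0 * ‖x Nm‖) = ‖L ^ n‖ * ‖x Nm‖ * φ t0 by ring]
    exact h6
    -- pass to the limit
  have h2K : Continuous fun e : ℝ => K ^ e := by
    have he : (fun e : ℝ => K ^ e) = fun e => Real.exp (Real.log K * e) := by
      funext e; rw [Real.rpow_def_of_pos hKpos]
    rw [he]
    exact Real.continuous_exp.comp (continuous_const.mul continuous_id)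
  have h3 : Tendsto (fun n : ℕ => K ^ ((n : ℝ)⁻¹)) atTop (nhds (K ^ (0 : ℝ))) :=
    (h2K.tendsto 0).comp tendsto_inv_atTop_nhds_zero_nat
  rw [Real.rpow_zero] at h3
  have hlim2 : Tendsto (fun n : ℕ => c * K ^ ((n : ℝ)⁻¹)) atTop (nhds c) := by
    have h4 := h3.const_mul c
    simpa using h4
  have hle : ∀ᶠ n : ℕ in atTop, c * K ^ ((n : ℝ)⁻¹) ≤ ‖L ^ n‖ ^ ((n : ℝ)⁻¹) := by
    filter_upwards [eventually_ge_atTop 1] with n hn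
    have hn0 : ((n : ℝ)) ≠ 0 := Nat.cast_ne_zero.2 (by omega)
    have h1 : (c ^ n * K) ^ ((n : ℝ)⁻¹) ≤ ‖L ^ n‖ ^ ((n : ℝ)⁻¹) :=
      Real.rpow_le_rpow (by positivity) (hopn n) (by positivity)
    have h2 : (c ^ n * K) ^ ((n : ℝ)⁻¹) = c * K ^ ((n : ℝ)⁻¹) := by
      rw [Real.mul_rpow (by positivity) hKpos.le]
      congr 1
      rw [← Real.rpow_natCast c n, ← Real.rpow_mul hc.le, mul_inv_cancel₀ hn0, Real.rpow_one]
    rw [← h2]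
    exact h1
  exact le_of_tendsto_of_tendsto hlim2 hr hle
end

section
/- Let K be a cone in a Banach space X, T: K → K continuous and compact, and suppose there is ξ > 0 with ξ < 1/r(L₁) for a positive bounded linear operator L₁ with L₁(P) ⊆ P, P ⊇ K being a cone of nonnegative functions, such that |Tu| ≤ ξ L₁|u| pointwise for all u in a set S ⊆ K \ {0}. Then Tu ≠ λu for all u ∈ S and λ ≥ 1. -/
open Filter

/-- If `|Tu| ≤ ξ L₁|u|` pointwise on a set `S` of nonzero elements of the cone
`K`, where `L₁` is a positive bounded linear operator and `ξ r(L₁) < 1`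
(i.e. `ξ < 1/r(L₁)`), then `Tu ≠ λu` for every `u ∈ S` and `λ ≥ 1`.
The Banach space `X` is a realization of a function space via `ev`, with
norm `‖x‖ = sup_t |ev x t|/φ(t)`, and `au u` realizes the pointwise absolute
value `|u|`. -/
theorem stmt14 {X : Type*} [NormedAddCommGroup X] [NormedSpace ℝ X]
    [CompleteSpace X]
    (φ : ℝ → ℝ) (hφ : ∀ t, 0 < φ t)
    (ev : X →ₗ[ℝ] (ℝ → ℝ)) (hinj : Function.Injective ev)
    (hnorm : ∀ x : X, ‖x‖ = ⨆ t : ℝ, |ev x t| / φ t)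
    -- the cones
    (P : Set X) (hP : P = {x : X | ∀ t, 0 ≤ ev x t})
    (K : Set X) (hKP : K ⊆ P)
    (hKadd : ∀ u ∈ K, ∀ v ∈ K, u + v ∈ K)
    (hKsmul : ∀ l : ℝ, 0 ≤ l → ∀ u ∈ K, l • u ∈ K)
    (hKpt : K ∩ (-K) = {0})
    -- the continuous compact map `T : K → K`
    (T : X → X) (hTK : ∀ u ∈ K, T u ∈ K) (hTcont : ContinuousOn T K)
    (hTcpt : ∀ B ⊆ K, Bornology.IsBounded B → IsCompact (closure (T '' B)))
    -- the positive bounded linear operator `L₁`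
    (L₁ : X →L[ℝ] X) (hL₁P : ∀ x ∈ P, L₁ x ∈ P)
    (ξ : ℝ) (hξ : 0 < ξ)
    (r : ℝ)
    (hr : Tendsto (fun n : ℕ => ‖L₁ ^ n‖ ^ ((n : ℝ)⁻¹)) atTop (nhds r))
    (hξr : ξ * r < 1)
    -- `S ⊆ K \ {0}` and the pointwise absolute value `au`
    (S : Set X) (hSK : S ⊆ K) (hS0 : (0 : X) ∉ S)
    (au : X → X) (hau : ∀ u ∈ S, ∀ t, ev (au u) t = |ev u t|)
    (hdom : ∀ u ∈ S, ∀ t, |ev (T u) t| ≤ ξ * ev (L₁ (au u)) t) :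
    ∀ u ∈ S, ∀ l : ℝ, 1 ≤ l → T u ≠ l • u := by
  intro u hu l hl heq
  set v : X := au u with hv
  have hvev : ∀ t, ev v t = |ev u t| := hau u hu
  -- `v ≠ 0`
  have hvne : v ≠ 0 := by
    intro h0
    apply hS0
    have : ∀ t, ev u t = 0 := by
      intro t
      have := hvev t
      rw [h0, map_zero] at this
      have : |ev u t| = 0 := by simpa using this.symm
      exact abs_eq_zero.mp this
    have : ev u = ev 0 := by
      funext t; rw [map_zero]; exact this t
    have := hinj this
    rwa [this] at hu
  -- pointwise: `v ≤ ξ • L₁ v`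
  have hstep : ∀ t, ev v t ≤ ξ * ev (L₁ v) t := by
    intro t
    have h1 := hdom u hu t
    have h2 : ev (T u) t = l * ev u t := by
      rw [heq, map_smul]; simp
    rw [h2] at h1
    have h3 : |ev u t| ≤ l * |ev u t| :=
      le_mul_of_one_le_left (abs_nonneg _) hl
    calc ev v t = |ev u t| := hvev t
      _ ≤ |l * ev u t| := by
          rw [abs_mul, abs_of_nonneg (by linarith : (0:ℝ) ≤ l)]; exact h3
      _ ≤ ξ * ev (L₁ v) t := h1
  -- powers of L₁ preserve P
  have hPn : ∀ n : ℕ, ∀ x ∈ P, (L₁ ^ n) x ∈ P := by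
    intro n
    induction n with
    | zero => intro x hx; simpa using hx
    | succ n ih =>
        intro x hx
        have : (L₁ ^ (n + 1)) x = (L₁ ^ n) (L₁ x) := by
          rw [pow_succ]; rfl
        rw [this]
        exact ih _ (hL₁P x hx)
  -- pointwise nonneg of ev on P
  have hPev : ∀ x ∈ P, ∀ t, 0 ≤ ev x t := by
    intro x hx t; rw [hP] at hx; exact hx t
  have hvP : v ∈ P := by
    rw [hP]; intro t; rw [hvev t]; exact abs_nonneg _
  -- iterate: `v ≤ ξ^n • L₁^n v` pointwise
  have hiter : ∀ n : ℕ, ∀ t, ev v t ≤ ξ ^ n * ev ((L₁ ^ n) v) t := by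
    intro n
    induction n with
    | zero => intro t; simp
    | succ n ih =>
        intro t
        -- w := ξ • L₁ v - v ∈ P
        have hwP : (ξ • L₁ v - v) ∈ P := by
          rw [hP]; intro s
          have : ev (ξ • L₁ v - v) s = ξ * ev (L₁ v) s - ev v s := by
            rw [map_sub, map_smul]; simp
          rw [this]
          linarith [hstep s]
        have h4 := hPev _ (hPn n _ hwP) t
        have h5 : ev ((L₁ ^ n) (ξ • L₁ v - v)) t
            = ξ * ev ((L₁ ^ n) (L₁ v)) t - ev ((L₁ ^ n) v) t := by
          rw [map_sub, map_smul, map_sub, map_smul]; simp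
        rw [h5] at h4
        have h6 : (L₁ ^ n) (L₁ v) = (L₁ ^ (n + 1)) v := by
          rw [pow_succ]; rfl
        rw [h6] at h4
        have hξn : (0:ℝ) ≤ ξ ^ n := le_of_lt (pow_pos hξ n)
        calc ev v t ≤ ξ ^ n * ev ((L₁ ^ n) v) t := ih t
          _ ≤ ξ ^ n * (ξ * ev ((L₁ ^ (n + 1)) v) t) := by
              apply mul_le_mul_of_nonneg_left _ hξn
              linarith
          _ = ξ ^ (n + 1) * ev ((L₁ ^ (n + 1)) v) t := by ring
  -- norm monotonicity: if 0 ≤ ev x ≤ ev y pointwise then ‖x‖ ≤ ‖y‖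
  have hmono : ∀ x y : X, (∀ t, 0 ≤ ev x t) → (∀ t, ev x t ≤ ev y t) →
      ‖x‖ ≤ ‖y‖ := by
    intro x y hx0 hxy
    by_cases hbdd : BddAbove (Set.range fun t => |ev y t| / φ t)
    · rw [hnorm x, hnorm y]
      apply ciSup_le
      intro t
      have h1 : |ev x t| / φ t ≤ |ev y t| / φ t := by
        have hax : |ev x t| = ev x t := abs_of_nonneg (hx0 t)
        have h2 : |ev x t| ≤ |ev y t| := by
          rw [hax]; exact le_trans (hxy t) (le_abs_self _)
        exact div_le_div_of_nonneg_right h2 (hφ t).le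
      exact h1.trans (le_ciSup hbdd t)
    · exfalso
      have hy0 : ‖y‖ = 0 := by
        rw [hnorm y, Real.iSup_of_not_bddAbove hbdd]
      have : y = 0 := norm_eq_zero.mp hy0
      apply hbdd
      rw [this]
      refine ⟨0, ?_⟩
      rintro _ ⟨t, rfl⟩
      simp [map_zero]
  -- norm estimate
  have hnle : ∀ n : ℕ, (1:ℝ) ≤ ξ ^ n * ‖L₁ ^ n‖ := by
    intro n
    have h1 : ‖v‖ ≤ ‖(ξ ^ n) • ((L₁ ^ n) v)‖ := by
      apply hmono
      · exact hPev v hvP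
      · intro t
        have : ev ((ξ ^ n) • ((L₁ ^ n) v)) t = ξ ^ n * ev ((L₁ ^ n) v) t := by
          rw [map_smul]; simp
        rw [this]
        exact hiter n t
    have h2 : ‖(ξ ^ n) • ((L₁ ^ n) v)‖ = ξ ^ n * ‖(L₁ ^ n) v‖ := by
      rw [norm_smul, Real.norm_eq_abs, abs_of_pos (pow_pos hξ n)]
    have h3 : ‖(L₁ ^ n) v‖ ≤ ‖L₁ ^ n‖ * ‖v‖ := (L₁ ^ n).le_opNorm v
    have hvpos : 0 < ‖v‖ := norm_pos_iff.mpr hvne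
    have h4 : ‖v‖ ≤ ξ ^ n * ‖L₁ ^ n‖ * ‖v‖ := by
      calc ‖v‖ ≤ ξ ^ n * ‖(L₁ ^ n) v‖ := by rw [← h2]; exact h1
        _ ≤ ξ ^ n * (‖L₁ ^ n‖ * ‖v‖) :=
            mul_le_mul_of_nonneg_left h3 (le_of_lt (pow_pos hξ n))
        _ = ξ ^ n * ‖L₁ ^ n‖ * ‖v‖ := by ring
    nlinarith
  -- eventually `1 ≤ ξ * ‖L₁^n‖ ^ (n⁻¹)`
  have hev : ∀ᶠ n : ℕ in atTop, (1:ℝ) ≤ ξ * ‖L₁ ^ n‖ ^ ((n : ℝ)⁻¹) := by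
    filter_upwards [eventually_ge_atTop 1] with n hn
    have ha : (0:ℝ) ≤ ‖L₁ ^ n‖ := norm_nonneg _
    have h5 : (ξ⁻¹) ^ n ≤ ‖L₁ ^ n‖ := by
      have := hnle n
      have hξn : (0:ℝ) < ξ ^ n := pow_pos hξ n
      rw [inv_pow]
      rw [inv_le_iff_one_le_mul₀ hξn] at *
      · linarith
    have h6 : ((ξ⁻¹ : ℝ) ^ n : ℝ) ^ ((n : ℝ)⁻¹) ≤ ‖L₁ ^ n‖ ^ ((n : ℝ)⁻¹) :=
      Real.rpow_le_rpow (by positivity) h5 (by positivity)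
    have hn0 : (n : ℝ) ≠ 0 := Nat.cast_ne_zero.mpr (by omega)
    have h7 : ((ξ⁻¹ : ℝ) ^ n : ℝ) ^ ((n : ℝ)⁻¹) = ξ⁻¹ := by
      rw [← Real.rpow_natCast (ξ⁻¹) n, ← Real.rpow_mul (by positivity),
        mul_inv_cancel₀ hn0, Real.rpow_one]
    rw [h7] at h6
    calc (1:ℝ) = ξ * ξ⁻¹ := by field_simp
      _ ≤ ξ * ‖L₁ ^ n‖ ^ ((n : ℝ)⁻¹) :=
          mul_le_mul_of_nonneg_left h6 (le_of_lt hξ)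
  -- take limits
  have hlim : Tendsto (fun n : ℕ => ξ * ‖L₁ ^ n‖ ^ ((n : ℝ)⁻¹)) atTop
      (nhds (ξ * r)) := hr.const_mul ξ
  have : (1:ℝ) ≤ ξ * r := ge_of_tendsto hlim hev
  linarith
end
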